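/- Conjugacy of F with the interval map outside the middle cone (Lemma 2.1). Let z ∈ ℍ \ P_c satisfy Im z > 0, Re z + Im z·cot β ∈ [−1, λ], and ℓ := 2·Im z·cot β ≤ λ. Set s(x) = x + 1 + ℓ/2. Then for every n ∈ ℕ with n ≤ k(z) (i.e. such that F^m(z) ∉ P_c for all 1 ≤ m < n), one has F^n(z) = g_ℓ^n(s(Re z)) − 1 − ℓ/2 + i·Im z. -/

import Mathlib

open Complex Real Set
open scoped Classical

noncomputable section

/-- The reciprocal golden ratio Φ = (√5 − 1)/2. -/
def Phi : ℝ := (Real.sqrt 5 - 1) / 2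

/-- β = (π − |α|)/2. -/
def beta {d : ℕ} (α : Fin d → ℝ) : ℝ := (π - ∑ k, α k) / 2

/-- σ_j = β + α_1 + … + α_j (partial sums of the angles, shifted by β). -/
def sig {d : ℕ} (α : Fin d → ℝ) (j : ℕ) : ℝ :=
  beta α + ∑ k ∈ Finset.univ.filter (fun k : Fin d => (k : ℕ) < j), α k

/-- θ_j = Σ_{τ(k)<τ(j)} α_k − Σ_{k<j} α_k. -/
def theta {d : ℕ} (α : Fin d → ℝ) (τ : Equiv.Perm (Fin d)) (j : Fin d) : ℝ :=
  (∑ k ∈ Finset.univ.filter (fun k : Fin d => τ k < τ j), α k)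
  - ∑ k ∈ Finset.univ.filter (fun k : Fin d => k < j), α k

/-- The cone P_0 = {z ∈ ℍ : arg z ∈ [0, β)}. -/
def P0 {d : ℕ} (α : Fin d → ℝ) : Set ℂ :=
  {z : ℂ | 0 ≤ z.im ∧ 0 ≤ z.arg ∧ z.arg < beta α}

/-- The middle cones P_1, …, P_d (0-indexed by `j : Fin d`):
P_1 corresponds to arg ∈ [β, β+α_1], and P_j (j ≥ 2) to arg ∈ (σ_{j−1}, σ_j]. -/
def Pmid {d : ℕ} (α : Fin d → ℝ) (j : Fin d) : Set ℂ :=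
  {z : ℂ | 0 ≤ z.im ∧
    (if (j : ℕ) = 0 then sig α 0 ≤ z.arg else sig α (j : ℕ) < z.arg) ∧
    z.arg ≤ sig α ((j : ℕ) + 1)}

/-- The cone P_{d+1} = {z ∈ ℍ : arg z ∈ (π−β, π]}. -/
def Pend {d : ℕ} (α : Fin d → ℝ) : Set ℂ :=
  {z : ℂ | 0 ≤ z.im ∧ π - beta α < z.arg ∧ z.arg ≤ π}

/-- The middle cone P_c = P_1 ∪ … ∪ P_d. -/
def Pc {d : ℕ} (α : Fin d → ℝ) : Set ℂ := ⋃ j, Pmid α j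

/-- The exchange map E. -/
def Emap {d : ℕ} (α : Fin d → ℝ) (τ : Equiv.Perm (Fin d)) (z : ℂ) : ℂ :=
  if h : ∃ j, z ∈ Pmid α j then
    z * Complex.exp ((theta α τ h.choose : ℝ) * Complex.I)
  else z

/-- The translation map G. -/
def Gmap {d : ℕ} (α : Fin d → ℝ) (lam eta : ℝ) (z : ℂ) : ℂ :=
  if z ∈ P0 α then z - 1
  else if z ∈ Pend α then z + (lam : ℂ)
  else if z ∈ Pc α then z - (eta : ℂ)
  else z

/-- The translated cone exchange F = G ∘ E. -/
def Fmap {d : ℕ} (α : Fin d → ℝ) (τ : Equiv.Perm (Fin d)) (lam eta : ℝ) (z : ℂ) : ℂ :=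
  Gmap α lam eta (Emap α τ z)

/-- The set of positive times at which the orbit of z visits P_c. -/
def hitSet {d : ℕ} (α : Fin d → ℝ) (τ : Equiv.Perm (Fin d)) (lam eta : ℝ) (z : ℂ) : Set ℕ :=
  {n : ℕ | 0 < n ∧ (Fmap α τ lam eta)^[n] z ∈ Pc α}

/-- The first hitting time k(z) of z to P_c (0 if the orbit never returns). -/
def hitTime {d : ℕ} (α : Fin d → ℝ) (τ : Equiv.Perm (Fin d)) (lam eta : ℝ) (z : ℂ) : ℕ :=
  sInf (hitSet α τ lam eta z)

/-- The first return map R(z) = F^{k(z)}(z). -/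
def Rmap {d : ℕ} (α : Fin d → ℝ) (τ : Equiv.Perm (Fin d)) (lam eta : ℝ) (z : ℂ) : ℂ :=
  (Fmap α τ lam eta)^[hitTime α τ lam eta z] z

/-- The interval map g_ℓ with middle interval (1, 1+ℓ) of fixed points:
g_ℓ(x) = x+λ on [0,1], x on (1,1+ℓ), x−1 on [1+ℓ, 1+λ]. -/
def gl (lam l x : ℝ) : ℝ :=
  if x ≤ 1 then x + lam else if x < 1 + l then x else x - 1

/-- The interval exchange g(x) = x+λ on [0,1], x−1 on (1, 1+λ]. -/
def g0 (lam x : ℝ) : ℝ := if x ≤ 1 then x + lam else x - 1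

/-- The set of positive times at which the g_ℓ-orbit of x visits [1, 1+ℓ]. -/
def hitSetI (lam l x : ℝ) : Set ℕ :=
  {n : ℕ | 0 < n ∧ (gl lam l)^[n] x ∈ Set.Icc 1 (1 + l)}

/-- The first hitting time n_ℓ(x) of x to [1, 1+ℓ] (as a natural number; 0 if
the orbit never hits). -/
def nhit (lam l x : ℝ) : ℕ := sInf (hitSetI lam l x)

/-- The first hitting time n_ℓ(x) of x to [1, 1+ℓ], with value ∞ ∈ ℕ∪{∞} if the
orbit never hits. -/
def nhitE (lam l x : ℝ) : ℕ∞ := sInf ((fun n : ℕ => (n : ℕ∞)) '' hitSetI lam l x)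

/-- The first hitting map r_ℓ(x) = g_ℓ^{n_ℓ(x)}(x). -/
def rmap (lam l x : ℝ) : ℝ := (gl lam l)^[nhit lam l x] x

/-- r'_ℓ(x) = r_ℓ(x) outside [1,1+ℓ] and x on [1,1+ℓ]. -/
def rmap' (lam l x : ℝ) : ℝ := if x ∈ Set.Icc 1 (1 + l) then x else rmap lam l x

/-- The left bifurcation set Λ_L (hitting times compared in ℕ∪{∞}). -/
def LamL (lam : ℝ) : Set ℝ :=
  {l | 0 < l ∧ l ≤ lam ∧ ∀ l' : ℝ, 0 < l' → l' < l → nhitE lam l 1 < nhitE lam l' 1}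

/-- The right bifurcation set Λ_R (hitting times compared in ℕ∪{∞}). -/
def LamR (lam : ℝ) : Set ℝ :=
  {l | 0 < l ∧ l ≤ lam ∧
    ∀ l' : ℝ, 0 < l' → l' < l → nhitE lam l (1 + l) < nhitE lam l' (1 + l')}

/-!
On the horizontal line `Im w = h` use the coordinate `u = Re w + 1 + ℓ/2`, where `ℓ = 2 h cot β`.
The boundary rays `arg = β` and `arg = π - β` cross this line at `u = 1 + ℓ` and `u = 1`, so
`P₀` is the part `u > 1 + ℓ`, `P_{d+1}` the part `u < 1`, and the segment `1 ≤ u ≤ 1 + ℓ` lies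
in `P_c`. Outside `P_c` the exchange `E` is the identity and `G` translates by `-1` on `P₀` and
by `+λ` on `P_{d+1}`: in the coordinate `u` this is exactly `g_ℓ`, and an induction along the
orbit finishes the proof.
-/

lemma arg_lt_iff_of_im_pos {w : ℂ} (hw : 0 < w.im) {b : ℝ} (hb0 : 0 < b) (hbπ : b < π) :
    w.arg < b ↔ w.im * Real.cos b < w.re * Real.sin b := by
  have hw0 : w ≠ 0 := fun h => by simp [h] at hw
  have hnorm : 0 < ‖w‖ := norm_pos_iff.2 hw0
  have harg : 0 ≤ w.arg := arg_nonneg_iff.2 hw.le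
  have hsin_sub : w.re * Real.sin b - w.im * Real.cos b = ‖w‖ * Real.sin (b - w.arg) := by
    rw [Real.sin_sub, sin_arg, cos_arg hw0]
    field_simp
  constructor
  · intro h
    have := Real.sin_pos_of_pos_of_lt_pi (sub_pos.2 h) (by linarith)
    nlinarith
  · intro h
    by_contra! h'
    have := Real.sin_nonpos_of_nonpos_of_neg_pi_le (sub_nonpos.2 h') (by linarith [arg_le_pi w])
    nlinarith

lemma pi_sub_lt_arg_iff_of_im_pos {w : ℂ} (hw : 0 < w.im) {b : ℝ} (hb0 : 0 < b) (hbπ : b < π) :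
    π - b < w.arg ↔ w.re * Real.sin b < -(w.im * Real.cos b) := by
  have hconj : (starRingEnd ℂ w).im < 0 := by simpa using hw
  have harg : w.arg ≠ π := (arg_lt_pi_iff.2 (Or.inr hw.ne')).ne
  have h := arg_lt_iff_of_im_pos (w := -starRingEnd ℂ w) (by simpa using hw) hb0 hbπ
  rw [arg_neg_eq_arg_add_pi_of_im_neg hconj, arg_conj, if_neg harg] at h
  simp only [neg_im, conj_im, neg_neg, neg_re, conj_re] at h
  constructor
  · intro h'
    linarith [h.1 (by linarith)]
  · intro h'
    linarith [h.2 (by linarith)]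

section TCE

variable {d : ℕ} {α : Fin d → ℝ}

lemma beta_pos (hsum : ∑ k, α k < π) : 0 < beta α := by
  unfold beta
  linarith

lemma beta_le_pi_div_two (hα : ∀ j, 0 ≤ α j) : beta α ≤ π / 2 := by
  have := Finset.sum_nonneg fun j (_ : j ∈ Finset.univ) => hα j
  unfold beta
  linarith

lemma sig_zero : sig α 0 = beta α := by
  simp [sig]

lemma sig_self : sig α d = π - beta α := by
  simp only [sig, Fin.is_lt, Finset.filter_true, beta]
  ring

lemma sig_mono (hα : ∀ j, 0 ≤ α j) : Monotone (sig α) := by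
  intro m m' hm
  refine add_le_add_right (Finset.sum_le_sum_of_subset_of_nonneg ?_ fun j _ _ => hα j) _
  exact Finset.monotone_filter_right _ fun j _ (hj : (j : ℕ) < m) => hj.trans_le hm

lemma mem_Pc_of_arg_le_sig (hd : 1 ≤ d) (hα : ∀ j, 0 ≤ α j) {w : ℂ} (hw : 0 ≤ w.im)
    (hβ : beta α ≤ w.arg) : ∀ m ≤ d, w.arg ≤ sig α m → w ∈ Pc α := by
  intro m
  induction m with
  | zero =>
    intro _ h0
    refine mem_iUnion.2 ⟨⟨0, hd⟩, hw, ?_, h0.trans (sig_mono hα zero_le_one)⟩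
    simpa [sig_zero] using hβ
  | succ m ih =>
    intro hm hle
    rcases le_or_gt w.arg (sig α m) with h | h
    · exact ih (by omega) h
    · refine mem_iUnion.2 ⟨⟨m, by omega⟩, hw, ?_, hle⟩
      split_ifs with hm0
      · simpa [sig_zero] using hβ
      · exact h

lemma mem_Pc_of_arg_mem_Icc (hd : 1 ≤ d) (hα : ∀ j, 0 ≤ α j) {w : ℂ} (hw : 0 ≤ w.im)
    (harg : w.arg ∈ Icc (beta α) (π - beta α)) : w ∈ Pc α :=
  mem_Pc_of_arg_le_sig hd hα hw harg.1 d le_rfl (sig_self ▸ harg.2)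

lemma Emap_of_not_mem_Pc (τ : Equiv.Perm (Fin d)) {w : ℂ} (hw : w ∉ Pc α) :
    Emap α τ w = w :=
  dif_neg fun ⟨j, hj⟩ => hw (mem_iUnion.2 ⟨j, hj⟩)

lemma Fmap_of_mem_P0 (τ : Equiv.Perm (Fin d)) (lam eta : ℝ) {w : ℂ} (hw : w ∉ Pc α)
    (h0 : w ∈ P0 α) : Fmap α τ lam eta w = w - 1 := by
  rw [Fmap, Emap_of_not_mem_Pc τ hw, Gmap, if_pos h0]

lemma Fmap_of_mem_Pend (τ : Equiv.Perm (Fin d)) (lam eta : ℝ) {w : ℂ} (hw : w ∉ Pc α)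
    (h0 : w ∉ P0 α) (hend : w ∈ Pend α) : Fmap α τ lam eta w = w + lam := by
  rw [Fmap, Emap_of_not_mem_Pc τ hw, Gmap, if_neg h0, if_pos hend]

/-- The point `s⁻¹(u) + i h`, where `s(x) = x + 1 + l / 2` is the paper's conjugacy. -/
def pointAtHeight (h l u : ℝ) : ℂ := ((u - 1 - l / 2 : ℝ) : ℂ) + (h : ℂ) * I

@[simp] lemma pointAtHeight_re (h l u : ℝ) : (pointAtHeight h l u).re = u - 1 - l / 2 := by
  simp [pointAtHeight]

@[simp] lemma pointAtHeight_im (h l u : ℝ) : (pointAtHeight h l u).im = h := by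
  simp [pointAtHeight]

section Height

variable {h l : ℝ} (hh : 0 < h) (hl : l = 2 * h * (Real.cos (beta α) / Real.sin (beta α)))
include hh hl

lemma pointAtHeight_mem_P0_iff (hβ : beta α ∈ Ioo 0 π) (u : ℝ) :
    pointAtHeight h l u ∈ P0 α ↔ 1 + l < u := by
  have hsin := Real.sin_pos_of_pos_of_lt_pi hβ.1 hβ.2
  have hcot : h * Real.cos (beta α) = l / 2 * Real.sin (beta α) := by
    rw [hl]
    field_simp
  have harg := arg_lt_iff_of_im_pos (w := pointAtHeight h l u) (by simpa) hβ.1 hβ.2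
  rw [pointAtHeight_re, pointAtHeight_im, hcot] at harg
  simp only [P0, mem_ofPred_eq, pointAtHeight_im, hh.le, arg_nonneg_iff, true_and, harg]
  constructor <;> intro h' <;> nlinarith

lemma pointAtHeight_mem_Pend_iff (hβ : beta α ∈ Ioo 0 π) (u : ℝ) :
    pointAtHeight h l u ∈ Pend α ↔ u < 1 := by
  have hsin := Real.sin_pos_of_pos_of_lt_pi hβ.1 hβ.2
  have hcot : h * Real.cos (beta α) = l / 2 * Real.sin (beta α) := by
    rw [hl]
    field_simp
  have harg := pi_sub_lt_arg_iff_of_im_pos (w := pointAtHeight h l u) (by simpa) hβ.1 hβ.2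
  rw [pointAtHeight_re, pointAtHeight_im, hcot] at harg
  simp only [Pend, mem_ofPred_eq, pointAtHeight_im, hh.le, arg_le_pi, and_true, true_and, harg]
  constructor <;> intro h' <;> nlinarith

lemma Fmap_pointAtHeight (hd : 1 ≤ d) (hα : ∀ j, 0 ≤ α j) (hsum : ∑ k, α k < π)
    (τ : Equiv.Perm (Fin d)) (lam eta : ℝ) {u : ℝ} (hw : pointAtHeight h l u ∉ Pc α) :
    Fmap α τ lam eta (pointAtHeight h l u) = pointAtHeight h l (gl lam l u) := by
  have hβ : beta α ∈ Ioo 0 π := ⟨beta_pos hsum, by linarith [beta_le_pi_div_two hα, pi_pos]⟩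
  have hl0 : 0 ≤ l := by
    have := Real.sin_pos_of_pos_of_lt_pi hβ.1 hβ.2
    have := Real.cos_nonneg_of_mem_Icc ⟨by linarith [hβ.1, pi_pos], beta_le_pi_div_two hα⟩
    rw [hl]
    positivity
  have hP0 := pointAtHeight_mem_P0_iff hh hl hβ u
  have hPend := pointAtHeight_mem_Pend_iff hh hl hβ u
  rcases lt_or_ge u 1 with hu | hu
  · rw [Fmap_of_mem_Pend τ lam eta hw (hP0.not.2 (by linarith)) (hPend.2 hu), gl, if_pos hu.le,
      pointAtHeight, pointAtHeight]
    push_cast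
    ring
  rcases le_or_gt u (1 + l) with hu' | hu'
  · refine absurd (mem_Pc_of_arg_mem_Icc hd hα (by simp [hh.le]) ⟨?_, ?_⟩) hw
    · by_contra! h'
      exact hu'.not_gt (hP0.1 ⟨by simp [hh.le], arg_nonneg_iff.2 (by simp [hh.le]), h'⟩)
    · by_contra! h'
      exact hu.not_gt (hPend.1 ⟨by simp [hh.le], h', arg_le_pi _⟩)
  · rw [Fmap_of_mem_P0 τ lam eta hw (hP0.2 hu'), gl, if_neg (by linarith), if_neg (by linarith),
      pointAtHeight, pointAtHeight]
    push_cast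
    ring

lemma iterate_Fmap_pointAtHeight (hd : 1 ≤ d) (hα : ∀ j, 0 ≤ α j) (hsum : ∑ k, α k < π)
    (τ : Equiv.Perm (Fin d)) (lam eta : ℝ) (u : ℝ) (n : ℕ)
    (hn : ∀ m < n, (Fmap α τ lam eta)^[m] (pointAtHeight h l u) ∉ Pc α) :
    (Fmap α τ lam eta)^[n] (pointAtHeight h l u) = pointAtHeight h l ((gl lam l)^[n] u) := by
  induction n with
  | zero => rfl
  | succ n ih =>
    have hprefix := ih fun m hm => hn m (by omega)
    have hlast := hn n n.lt_succ_self
    rw [hprefix] at hlast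
    rw [Function.iterate_succ_apply', Function.iterate_succ_apply', hprefix,
      Fmap_pointAtHeight hh hl hd hα hsum τ lam eta hlast]

end Height

end TCE

theorem F_conjugate_to_interval_map_general
    (d : ℕ) (hd : 1 ≤ d) (α : Fin d → ℝ) (hpos : ∀ j, 0 < α j) (hsum : ∑ k, α k < π)
    (τ : Equiv.Perm (Fin d)) (lam eta : ℝ)
    (z : ℂ) (hz : z ∉ Pc α) (him : 0 < z.im)
    (l : ℝ) (hldef : l = 2 * z.im * (Real.cos (beta α) / Real.sin (beta α)))
    (n : ℕ) (hn : ∀ m : ℕ, 1 ≤ m → m < n → (Fmap α τ lam eta)^[m] z ∉ Pc α) :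
    (Fmap α τ lam eta)^[n] z =
      Complex.ofReal ((gl lam l)^[n] (z.re + 1 + l / 2) - 1 - l / 2)
        + Complex.ofReal z.im * Complex.I := by
  have hz_eq : z = pointAtHeight z.im l (z.re + 1 + l / 2) := by
    apply Complex.ext <;> simp only [pointAtHeight_re, pointAtHeight_im]
    ring
  have horbit : ∀ m < n, (Fmap α τ lam eta)^[m] z ∉ Pc α := by
    rintro (_ | m) hm
    · exact hz
    · exact hn _ (by omega) hm
  rw [hz_eq] at horbit
  conv_lhs => rw [hz_eq]
  exact iterate_Fmap_pointAtHeight him hldef hd (fun j => (hpos j).le) hsum τ lam eta _ n horbit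

/-- **Lemma 2.1 (conjugacy of F with the interval map outside the middle cone).**
For z ∈ ℍ \ P_c with Im z > 0, Re z + Im z·cot β ∈ [−1, λ] and
ℓ = 2·Im z·cot β ≤ λ, the iterates of F up to the first hitting time of P_c are
conjugated to iterates of g_ℓ via s(x) = x + 1 + ℓ/2. -/
theorem F_conjugate_to_interval_map
    (d : ℕ) (hd : 1 ≤ d) (α : Fin d → ℝ) (hpos : ∀ j, 0 < α j) (hsum : ∑ k, α k < π)
    (τ : Equiv.Perm (Fin d)) (lam eta : ℝ)
    (hlam : 0 < lam) (hirr : Irrational lam) (heta0 : 0 < eta) (hetal : eta < lam)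
    (z : ℂ) (hz : z ∉ Pc α) (him : 0 < z.im)
    (l : ℝ) (hldef : l = 2 * z.im * (Real.cos (beta α) / Real.sin (beta α)))
    (hre : z.re + z.im * (Real.cos (beta α) / Real.sin (beta α)) ∈ Set.Icc (-1 : ℝ) lam)
    (hl : l ≤ lam)
    (n : ℕ) (hn : ∀ m : ℕ, 1 ≤ m → m < n → (Fmap α τ lam eta)^[m] z ∉ Pc α) :
    (Fmap α τ lam eta)^[n] z =
      Complex.ofReal ((gl lam l)^[n] (z.re + 1 + l / 2) - 1 - l / 2)
        + Complex.ofReal z.im * Complex.I :=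
  F_conjugate_to_interval_map_general d hd α hpos hsum τ lam eta z hz him l hldef n hn
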